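/- In the ring of formal power series in the three variables x, s, t over ℚ, with D = 1 + (2−s−t)·g_en(x) + (1−s)·(1−t)·(g_en(x)² − g_ee(x)·g_nn(x)), the series G_ee(x,s,t) = Σ_{k≥1} Σ_{ℓ,r≥0} b^{ee}_{ℓ,r}(k)·x^k·s^ℓ·t^r and G_nn(x,s,t) = Σ_{k≥1} Σ_{ℓ,r≥0} b^{nn}_{ℓ,r}(k)·x^k·s^ℓ·t^r satisfy G_ee(x,s,t)·D = g_ee(x) and G_nn(x,s,t)·D = g_nn(x). -/

import Mathlib

/-!
Lattice paths with unit East (`true`) and unit North (`false`) steps,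
bounces with respect to the line `y = (β/α)·x`, and the associated
generating functions over `ℚ`.
-/

/-- A lattice path is a list of unit steps: `true` = East, `false` = North. -/
abbrev LatticePath := List Bool

/-- `p` is a lattice path from `(0,0)` to `(α*k, β*k)`, i.e. a member of `L_{β/α}(k)`. -/
def InL (α β k : ℕ) (p : LatticePath) : Prop :=
  p.count true = α * k ∧ p.count false = β * k

/-- `p` has a left bounce at step index `i`: step `i` is an E-step, step `i+1` is an
N-step, and their common endpoint (the point reached after `i+1` steps) lies on the
line `y = (β/α)·x`, i.e. `α·y = β·x`. -/
def IsLeftBounce (α β : ℕ) (p : LatticePath) (i : ℕ) : Prop :=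
  p[i]? = some true ∧ p[i + 1]? = some false ∧
    α * ((p.take (i + 1)).count false) = β * ((p.take (i + 1)).count true)

/-- `p` has a right bounce at step index `i`: step `i` is an N-step, step `i+1` is an
E-step, and their common endpoint lies on the line `y = (β/α)·x`. -/
def IsRightBounce (α β : ℕ) (p : LatticePath) (i : ℕ) : Prop :=
  p[i]? = some false ∧ p[i + 1]? = some true ∧
    α * ((p.take (i + 1)).count false) = β * ((p.take (i + 1)).count true)

/-- The number of left bounces of `p` with respect to the line `y = (β/α)·x`. -/
noncomputable def leftBounces (α β : ℕ) (p : LatticePath) : ℕ :=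
  {i | IsLeftBounce α β p i}.ncard

/-- The number of right bounces of `p` with respect to the line `y = (β/α)·x`. -/
noncomputable def rightBounces (α β : ℕ) (p : LatticePath) : ℕ :=
  {i | IsRightBounce α β p i}.ncard

/-- `p` is bounce-free: it has no left and no right bounces. -/
def BounceFree (α β : ℕ) (p : LatticePath) : Prop :=
  (∀ i, ¬ IsLeftBounce α β p i) ∧ (∀ i, ¬ IsRightBounce α β p i)

/-- The first step of `p` is `a`. -/
def FirstStep (p : LatticePath) (a : Bool) : Prop := p.head? = some a

/-- The last step of `p` is `b`. -/
def LastStep (p : LatticePath) (b : Bool) : Prop := p.getLast? = some b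

/-- The generating function `Σ_{k≥1} |S k|·xᵏ ∈ ℚ[[x]]` of a family of path sets. -/
noncomputable def gfOf (S : ℕ → Set LatticePath) : PowerSeries ℚ :=
  PowerSeries.mk fun k => if k = 0 then 0 else ((S k).ncard : ℚ)

/-- `g(x) = Σ_{k≥1} C((α+β)k, αk)·xᵏ`, counting all paths in `L_{β/α}(k)`. -/
noncomputable def gSer (α β : ℕ) : PowerSeries ℚ :=
  PowerSeries.mk fun k => if k = 0 then 0 else ((((α + β) * k).choose (α * k) : ℕ) : ℚ)

/-- `g_ee(x) = Σ_{k≥1} C((α+β)k−2, αk−2)·xᵏ`, counting EE-paths in `L_{β/α}(k)`.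
We write the lower index as `βk = ((α+β)k−2) − (αk−2)`, which equals
`C((α+β)k−2, αk−2)` by the symmetry of binomial coefficients and correctly
implements the convention `C(n, −1) = 0` (needed when `αk = 1`), which ℕ-truncated
subtraction would not. -/
noncomputable def geeSer (α β : ℕ) : PowerSeries ℚ :=
  PowerSeries.mk fun k => if k = 0 then 0 else ((((α + β) * k - 2).choose (β * k) : ℕ) : ℚ)

/-- `g_en(x) = Σ_{k≥1} C((α+β)k−2, αk−1)·xᵏ`, counting EN-paths in `L_{β/α}(k)`. -/
noncomputable def genSer (α β : ℕ) : PowerSeries ℚ :=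
  PowerSeries.mk fun k => if k = 0 then 0 else ((((α + β) * k - 2).choose (α * k - 1) : ℕ) : ℚ)

/-- `g_nn(x) = Σ_{k≥1} C((α+β)k−2, αk)·xᵏ`, counting NN-paths in `L_{β/α}(k)`. -/
noncomputable def gnnSer (α β : ℕ) : PowerSeries ℚ :=
  PowerSeries.mk fun k => if k = 0 then 0 else ((((α + β) * k - 2).choose (α * k) : ℕ) : ℚ)

/-- `f_ee(x)`: generating function of bounce-free EE-paths in `L_{β/α}(k)`. -/
noncomputable def feeSer (α β : ℕ) : PowerSeries ℚ :=
  gfOf fun k => {p | InL α β k p ∧ BounceFree α β p ∧ FirstStep p true ∧ LastStep p true}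

/-- `f_en(x)`: generating function of bounce-free EN-paths in `L_{β/α}(k)`. -/
noncomputable def fenSer (α β : ℕ) : PowerSeries ℚ :=
  gfOf fun k => {p | InL α β k p ∧ BounceFree α β p ∧ FirstStep p true ∧ LastStep p false}

/-- `f_nn(x)`: generating function of bounce-free NN-paths in `L_{β/α}(k)`. -/
noncomputable def fnnSer (α β : ℕ) : PowerSeries ℚ :=
  gfOf fun k => {p | InL α β k p ∧ BounceFree α β p ∧ FirstStep p false ∧ LastStep p false}

/-- `f(x)`: generating function of all bounce-free paths in `L_{β/α}(k)`. -/
noncomputable def fSer (α β : ℕ) : PowerSeries ℚ :=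
  gfOf fun k => {p | InL α β k p ∧ BounceFree α β p}

/-- `B_{ℓ,r}(x)`: generating function of paths in `L_{β/α}(k)` with exactly `ℓ`
left bounces and exactly `r` right bounces. -/
noncomputable def BSer (α β ℓ r : ℕ) : PowerSeries ℚ :=
  gfOf fun k => {p | InL α β k p ∧ leftBounces α β p = ℓ ∧ rightBounces α β p = r}

/-- The Fuss–Catalan generating function `c_α(x) = Σ_{k≥0} 1/(αk+1)·C((α+1)k, k)·xᵏ`. -/
noncomputable def fussCatalan (α : ℕ) : PowerSeries ℚ :=
  PowerSeries.mk fun k => (1 / ((α * k + 1 : ℕ) : ℚ)) * ((((α + 1) * k).choose k : ℕ) : ℚ)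

/-- For slope `1/α`: `p` has a horizontal cross at the lattice point `(α*i, i)` (`i ≥ 1`):
`p` passes through `(α*i, i)` (so the prefix of length `(α+1)*i` has exactly `α*i`
E-steps), and both the step ending there and the step starting there are E-steps. -/
def HasHCrossAt (α : ℕ) (p : LatticePath) (i : ℕ) : Prop :=
  1 ≤ i ∧ (p.take ((α + 1) * i)).count true = α * i ∧
    p[(α + 1) * i - 1]? = some true ∧ p[(α + 1) * i]? = some true

/-- `p` has no horizontal crosses with respect to the line `y = x/α`. -/
def NoHCross (α : ℕ) (p : LatticePath) : Prop := ∀ i, ¬ HasHCrossAt α p i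

/-- Embed a power series in `x` into `ℚ[[x,s,t]]`, where the variables
`0, 1, 2 : Fin 3` stand for `x, s, t` respectively. -/
noncomputable def toMv (φ : PowerSeries ℚ) : MvPowerSeries (Fin 3) ℚ := fun d =>
  if d 1 = 0 ∧ d 2 = 0 then PowerSeries.coeff (d 0) φ else 0

/-- The variable `s` of `ℚ[[x,s,t]]`. -/
noncomputable def sVar : MvPowerSeries (Fin 3) ℚ := MvPowerSeries.X 1

/-- The variable `t` of `ℚ[[x,s,t]]`. -/
noncomputable def tVar : MvPowerSeries (Fin 3) ℚ := MvPowerSeries.X 2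

/-- `G(x,s,t) = Σ_{k≥1} Σ_{ℓ,r≥0} b_{ℓ,r}(k)·xᵏsˡtʳ`, where `b_{ℓ,r}(k)` is the number
of paths in `L_{β/α}(k)` with exactly `ℓ` left and `r` right bounces. -/
noncomputable def G3 (α β : ℕ) : MvPowerSeries (Fin 3) ℚ := fun d =>
  if d 0 = 0 then 0 else
    (({p | InL α β (d 0) p ∧ leftBounces α β p = d 1 ∧
        rightBounces α β p = d 2}).ncard : ℚ)

/-- `G_ab(x,s,t) = Σ_{k≥1} Σ_{ℓ,r≥0} b^{ab}_{ℓ,r}(k)·xᵏsˡtʳ`, where `b^{ab}_{ℓ,r}(k)`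
is the number of AB-paths in `L_{β/α}(k)` with exactly `ℓ` left and `r` right
bounces. -/
noncomputable def G3ab (α β : ℕ) (a b : Bool) : MvPowerSeries (Fin 3) ℚ := fun d =>
  if d 0 = 0 then 0 else
    (({p | InL α β (d 0) p ∧ FirstStep p a ∧ LastStep p b ∧
        leftBounces α β p = d 1 ∧ rightBounces α β p = d 2}).ncard : ℚ)

/-- The denominator
`D = 1 + (2−s−t)·g_en(x) + (1−s)·(1−t)·(g_en(x)² − g_ee(x)·g_nn(x)) ∈ ℚ[[x,s,t]]`. -/
noncomputable def D3 (α β : ℕ) : MvPowerSeries (Fin 3) ℚ :=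
  1 + (2 - sVar - tVar) * toMv (genSer α β)
    + (1 - sVar) * (1 - tVar) *
        (toMv (genSer α β) ^ 2 - toMv (geeSer α β) * toMv (gnnSer α β))


/-!
Cut a path at its first bounce. Because `α` and `β` are coprime, the lattice points of the line
are the points `(αj, βj)`, so the cut splits the path uniquely into a bounce-free path of
`L_{β/α}(j)` ending with a step `c` and a path of `L_{β/α}(k - j)` starting with the opposite
step; the cut itself is a left bounce if `c` is E and a right bounce if `c` is N. For the
`2 × 2` matrices `F`, `g`, `G` of bounce-free, all, and bounce-weighted paths (indexed by first
and last step) this reads `g = F + F P g` and `G = F + F Q G`, with `P = [[0, 1], [1, 0]]` and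
`Q = [[0, s], [t, 0]]`. Eliminating `F` (`1 - F P` is invertible since `F` has no constant term)
gives `(1 + g (P - Q)) G = g`, and Cramer's rule for this system, whose determinant is `D`, gives
the two diagonal identities. Counting words with prescribed letters identifies the entries of
`g` with `g_ee`, `g_en`, `g_nn`.
-/

section

variable {α β : ℕ}

/-! ### Words with prescribed letter counts -/

lemma finite_setOf_length_eq_and (n : ℕ) (P : List Bool → Prop) :
    {m : List Bool | m.length = n ∧ P m}.Finite :=
  (List.finite_length_eq Bool n).subset fun _ hm => hm.1

lemma ncard_length_count (b : Bool) (n e : ℕ) :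
    {m : List Bool | m.length = n ∧ m.count b = e}.ncard = n.choose e := by
  induction n generalizing e with
  | zero =>
    rw [show {m : List Bool | m.length = 0 ∧ m.count b = e} = if e = 0 then {[]} else ∅ by
      ext (_ | ⟨c, m⟩) <;> split_ifs <;> simp_all [eq_comm]]
    split_ifs with he
    · simp [he]
    · simp [Nat.choose_eq_zero_of_lt (Nat.pos_of_ne_zero he)]
  | succ n ih =>
    have hsplit : {m : List Bool | m.length = n + 1 ∧ m.count b = e} =
        List.cons b '' {m | m.length = n ∧ m.count b + 1 = e} ∪
          List.cons (!b) '' {m | m.length = n ∧ m.count b = e} := by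
      ext (_ | ⟨c, m⟩)
      · simp
      · cases b <;> cases c <;> simp
    have hdisj : Disjoint (List.cons b '' {m | m.length = n ∧ m.count b + 1 = e})
        (List.cons (!b) '' {m | m.length = n ∧ m.count b = e}) := by
      rw [Set.disjoint_left]
      rintro _ ⟨_, _, rfl⟩ ⟨_, _, h⟩
      cases b <;> simp at h
    rw [hsplit, Set.ncard_union_eq hdisj ((finite_setOf_length_eq_and _ _).image _)
        ((finite_setOf_length_eq_and _ _).image _),
      Set.ncard_image_of_injective _ List.cons_injective,
      Set.ncard_image_of_injective _ List.cons_injective, ih]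
    cases e with
    | zero => simp
    | succ e => simp [Nat.choose_succ_succ', ← ih]

lemma ncard_firstStep_lastStep (a b : Bool) (n : ℕ) (P : List Bool → Prop) :
    {p : List Bool | p.length = n + 2 ∧ FirstStep p a ∧ LastStep p b ∧ P p}.ncard =
      {m : List Bool | m.length = n ∧ P (a :: (m ++ [b]))}.ncard := by
  have himage : {p : List Bool | p.length = n + 2 ∧ FirstStep p a ∧ LastStep p b ∧ P p} =
      (fun m => a :: (m ++ [b])) '' {m | m.length = n ∧ P (a :: (m ++ [b]))} := by
    ext p
    constructor
    · rintro ⟨hlen, hfirst, hlast, hP⟩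
      obtain ⟨q, rfl⟩ := List.getLast?_eq_some_iff.mp hlast
      obtain ⟨m, rfl⟩ : ∃ m, q = a :: m := by
        cases q with
        | nil => simp at hlen
        | cons c m => simp_all [FirstStep]
      exact ⟨m, ⟨by simpa using hlen, hP⟩, rfl⟩
    · rintro ⟨m, ⟨hlen, hP⟩, rfl⟩
      refine ⟨by simp [hlen], rfl, ?_, hP⟩
      show (a :: (m ++ [b])).getLast? = some b
      rw [← List.cons_append, List.getLast?_concat]
  rw [himage, Set.ncard_image_of_injective]
  intro m m' h
  simpa using h

lemma ncard_biUnion_finset {ι X : Type*} (s : Finset ι) (f : ι → Set X)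
    (hfin : ∀ i ∈ s, (f i).Finite) (hdisj : (s : Set ι).PairwiseDisjoint f) :
    (⋃ i ∈ s, f i).ncard = ∑ i ∈ s, (f i).ncard := by
  classical
  induction s using Finset.cons_induction with
  | empty => simp
  | cons i s hi ih =>
    have hfin' : ∀ i' ∈ s, (f i').Finite := fun i' hi' => hfin i' (by simp [hi'])
    rw [Finset.sum_cons, Finset.cons_eq_insert, Finset.set_biUnion_insert,
      Set.ncard_union_eq ?_ (hfin i (by simp)) ?_, ih hfin' (hdisj.subset (by simp))]
    · refine Set.disjoint_iUnion₂_right.mpr fun i' hi' => hdisj (by simp) (by simp [hi']) ?_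
      rintro rfl
      exact hi hi'
    · exact Set.Finite.biUnion s.finite_toSet hfin'

/-! ### Paths of `L_{β/α}(k)` and their first and last steps -/

lemma length_eq_of_inL {k : ℕ} {p : LatticePath} (hp : InL α β k p) :
    p.length = (α + β) * k := by
  rw [← List.count_true_add_count_false, hp.1, hp.2, add_mul]

lemma finite_inL_and (k : ℕ) (P : LatticePath → Prop) : {p | InL α β k p ∧ P p}.Finite :=
  (finite_setOf_length_eq_and ((α + β) * k) fun _ => True).subset
    fun _ hp => ⟨length_eq_of_inL hp.1, trivial⟩

lemma InL.append {j l : ℕ} {q₁ q₂ : LatticePath} (h₁ : InL α β j q₁) (h₂ : InL α β l q₂) :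
    InL α β (j + l) (q₁ ++ q₂) := by
  simp only [InL, List.count_append, h₁.1, h₁.2, h₂.1, h₂.2, Nat.mul_add, and_self]

lemma InL.ne_nil {k : ℕ} {p : LatticePath} (hα : 0 < α) (hk : 0 < k) (hp : InL α β k p) :
    p ≠ [] := by
  rw [← List.length_pos_iff, length_eq_of_inL hp]
  exact Nat.mul_pos (by omega) hk

lemma InL.mul_count_false_eq {j : ℕ} {q : LatticePath} (h : InL α β j q) :
    α * q.count false = β * q.count true := by
  rw [h.1, h.2, Nat.mul_left_comm]

lemma firstStep_append {q₁ : LatticePath} (q₂ : LatticePath) (hq₁ : q₁ ≠ []) (a : Bool) :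
    FirstStep (q₁ ++ q₂) a ↔ FirstStep q₁ a := by
  rw [FirstStep, FirstStep, List.head?_append_of_ne_nil _ hq₁]

lemma lastStep_append (q₁ : LatticePath) {q₂ : LatticePath} (hq₂ : q₂ ≠ []) (b : Bool) :
    LastStep (q₁ ++ q₂) b ↔ LastStep q₂ b := by
  rw [LastStep, LastStep, List.getLast?_append_of_ne_nil _ hq₂]

lemma ncard_inL_firstStep_lastStep {k n : ℕ} (hn : (α + β) * k = n + 2) (a b c : Bool) (e : ℕ)
    (he : ∀ m : List Bool, m.length = n → (InL α β k (a :: (m ++ [b])) ↔ m.count c = e)) :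
    {p | InL α β k p ∧ FirstStep p a ∧ LastStep p b}.ncard = n.choose e := by
  calc {p | InL α β k p ∧ FirstStep p a ∧ LastStep p b}.ncard
      = {p : List Bool | p.length = n + 2 ∧ FirstStep p a ∧ LastStep p b ∧ InL α β k p}.ncard := by
        congr 1
        ext p
        constructor
        · rintro ⟨hp, hfirst, hlast⟩
          exact ⟨hn ▸ length_eq_of_inL hp, hfirst, hlast, hp⟩
        · rintro ⟨-, hfirst, hlast, hp⟩
          exact ⟨hp, hfirst, hlast⟩
    _ = {m : List Bool | m.length = n ∧ m.count c = e}.ncard := by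
        rw [ncard_firstStep_lastStep]
        congr 1
        ext m
        exact and_congr_right (he m)
    _ = n.choose e := ncard_length_count c n e

noncomputable def pathSer (α β : ℕ) (a b : Bool) : PowerSeries ℚ :=
  gfOf fun k => {p | InL α β k p ∧ FirstStep p a ∧ LastStep p b}

lemma coeff_gfOf (S : ℕ → Set LatticePath) (k : ℕ) :
    PowerSeries.coeff k (gfOf S) = if k = 0 then 0 else ((S k).ncard : ℚ) :=
  PowerSeries.coeff_mk _ _

lemma inL_cons_append_iff_count {k : ℕ} (hα : 0 < α) (hβ : 0 < β) (hk : k ≠ 0)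
    {a b c : Bool} (hc : a ≠ c ∨ b ≠ c) (m : List Bool) (hm : m.length + 2 = (α + β) * k) :
    InL α β k (a :: (m ++ [b])) ↔
      m.count c = (if c then α * k else β * k) - (a == c).toNat - (b == c).toNat := by
  have := m.count_true_add_count_false
  have := Nat.mul_pos hα (Nat.pos_of_ne_zero hk)
  have := Nat.mul_pos hβ (Nat.pos_of_ne_zero hk)
  rw [add_mul] at hm
  cases a <;> cases b <;> cases c <;> simp [InL] at hc ⊢ <;> omega

-- With `hc`, the ℕ-subtraction in the lower index never truncates.
lemma pathSer_eq_mk_choose (hα : 0 < α) (hβ : 0 < β) {a b c : Bool} (hc : a ≠ c ∨ b ≠ c) :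
    pathSer α β a b = PowerSeries.mk fun k => if k = 0 then 0 else
      ((((α + β) * k - 2).choose
        ((if c then α * k else β * k) - (a == c).toNat - (b == c).toNat) : ℕ) : ℚ) := by
  ext k
  rw [pathSer, coeff_gfOf, PowerSeries.coeff_mk]
  rcases eq_or_ne k 0 with rfl | hk
  · simp
  have h2 : 2 ≤ (α + β) * k :=
    calc 2 ≤ (α + β) * 1 := by omega
      _ ≤ (α + β) * k := Nat.mul_le_mul_left _ (Nat.one_le_iff_ne_zero.mpr hk)
  rw [if_neg hk, if_neg hk, ncard_inL_firstStep_lastStep (Nat.sub_add_cancel h2).symm a b c _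
    fun m hm => inL_cons_append_iff_count hα hβ hk hc m (by omega)]

lemma pathSer_true_true (hα : 0 < α) (hβ : 0 < β) : pathSer α β true true = geeSer α β :=
  pathSer_eq_mk_choose hα hβ (c := false) (by simp)

lemma pathSer_false_false (hα : 0 < α) (hβ : 0 < β) : pathSer α β false false = gnnSer α β :=
  pathSer_eq_mk_choose hα hβ (c := true) (by simp)

lemma pathSer_true_false (hα : 0 < α) (hβ : 0 < β) : pathSer α β true false = genSer α β :=
  pathSer_eq_mk_choose hα hβ (c := true) (by simp)

lemma pathSer_false_true (hα : 0 < α) (hβ : 0 < β) : pathSer α β false true = genSer α β :=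
  pathSer_eq_mk_choose hα hβ (c := true) (by simp)

/-! ### Bounces -/

def IsBounce (α β : ℕ) (p : LatticePath) (c : Bool) (i : ℕ) : Prop :=
  p[i]? = some c ∧ p[i + 1]? = some (!c) ∧
    α * (p.take (i + 1)).count false = β * (p.take (i + 1)).count true

noncomputable def bounces (α β : ℕ) (p : LatticePath) (c : Bool) : ℕ :=
  {i | IsBounce α β p c i}.ncard

lemma leftBounces_eq_bounces (p : LatticePath) : leftBounces α β p = bounces α β p true := rfl

lemma rightBounces_eq_bounces (p : LatticePath) : rightBounces α β p = bounces α β p false :=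
  rfl

lemma bounceFree_iff {p : LatticePath} : BounceFree α β p ↔ ∀ c i, ¬ IsBounce α β p c i :=
  ⟨fun h c => c.casesOn h.2 h.1, fun h => ⟨h true, h false⟩⟩

lemma IsBounce.lt_length {p : LatticePath} {c : Bool} {i : ℕ} (h : IsBounce α β p c i) :
    i + 1 < p.length :=
  (List.getElem?_eq_some_iff.mp h.2.1).1

lemma finite_setOf_isBounce (p : LatticePath) (c : Bool) : {i | IsBounce α β p c i}.Finite :=
  (Set.finite_Iio p.length).subset fun _ hi => by
    have := IsBounce.lt_length hi
    simp only [Set.mem_Iio]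
    omega

lemma bounces_eq_zero_of_bounceFree {p : LatticePath} (hp : BounceFree α β p) (c : Bool) :
    bounces α β p c = 0 := by
  rw [bounces, Set.ncard_eq_zero (finite_setOf_isBounce p c)]
  exact Set.eq_empty_of_forall_notMem (bounceFree_iff.mp hp c)

section Append

variable {q₁ q₂ : LatticePath}

lemma isBounce_append_of_lt {i : ℕ} (hi : i + 1 < q₁.length) (c : Bool) :
    IsBounce α β (q₁ ++ q₂) c i ↔ IsBounce α β q₁ c i := by
  rw [IsBounce, IsBounce, List.getElem?_append_left (by omega), List.getElem?_append_left hi,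
    List.take_append_of_le_length hi.le]

lemma isBounce_append_length_sub_one (hq : α * q₁.count false = β * q₁.count true)
    (hq₁ : q₁ ≠ []) (c : Bool) :
    IsBounce α β (q₁ ++ q₂) c (q₁.length - 1) ↔
      q₁.getLast? = some c ∧ q₂.head? = some (!c) := by
  have hlen : q₁.length - 1 + 1 = q₁.length := Nat.sub_add_cancel (List.length_pos_iff.mpr hq₁)
  rw [IsBounce, hlen, List.getElem?_append_left (by omega), List.getElem?_append_right le_rfl,
    Nat.sub_self, List.take_append_of_le_length le_rfl, List.take_length,
    ← List.getLast?_eq_getElem?, ← List.head?_eq_getElem?]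
  simp [hq]

lemma isBounce_append_length_add (hq : α * q₁.count false = β * q₁.count true) (c : Bool)
    (i : ℕ) : IsBounce α β (q₁ ++ q₂) c (q₁.length + i) ↔ IsBounce α β q₂ c i := by
  rw [IsBounce, IsBounce, List.getElem?_append_right (by omega),
    List.getElem?_append_right (by omega), Nat.add_sub_cancel_left,
    show q₁.length + i + 1 - q₁.length = i + 1 by omega, add_assoc, List.take_length_add_append,
    List.count_append, List.count_append, Nat.mul_add, Nat.mul_add, hq, add_right_inj]

variable {c₀ : Bool}

lemma setOf_isBounce_append (hbf : BounceFree α β q₁)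
    (hq : α * q₁.count false = β * q₁.count true) (hq₁ : q₁ ≠ [])
    (hlast : q₁.getLast? = some c₀) (hhead : q₂.head? = some (!c₀)) (c : Bool) :
    {i | IsBounce α β (q₁ ++ q₂) c i} =
      (if c = c₀ then {q₁.length - 1} else ∅) ∪ (q₁.length + ·) '' {i | IsBounce α β q₂ c i} := by
  have hpos := List.length_pos_iff.mpr hq₁
  ext i
  simp only [Set.mem_ofPred_eq, Set.mem_union, Set.mem_image]
  rcases lt_trichotomy (i + 1) q₁.length with hi | hi | hi
  · rw [isBounce_append_of_lt hi]
    refine iff_of_false (bounceFree_iff.mp hbf c i) ?_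
    rintro (h | ⟨j, -, rfl⟩)
    · split_ifs at h <;> simp at h; omega
    · omega
  · obtain rfl : i = q₁.length - 1 := by omega
    rw [isBounce_append_length_sub_one hq hq₁, hlast, hhead]
    constructor
    · rintro ⟨h, -⟩
      simp_all
    · rintro (h | ⟨j, -, hj⟩)
      · split_ifs at h with hc <;> simp_all
      · omega
  · obtain ⟨j, rfl⟩ := Nat.exists_eq_add_of_le (show q₁.length ≤ i by omega)
    rw [isBounce_append_length_add hq]
    constructor
    · exact fun h => Or.inr ⟨j, h, rfl⟩
    · rintro (h | ⟨j', hj', hj⟩)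
      · split_ifs at h <;> simp at h; omega
      · rwa [← Nat.add_left_cancel hj]

lemma bounces_append (hbf : BounceFree α β q₁) (hq : α * q₁.count false = β * q₁.count true)
    (hq₁ : q₁ ≠ []) (hlast : q₁.getLast? = some c₀) (hhead : q₂.head? = some (!c₀))
    (c : Bool) : bounces α β (q₁ ++ q₂) c = bounces α β q₂ c + if c = c₀ then 1 else 0 := by
  have hpos := List.length_pos_iff.mpr hq₁
  have hdisj : Disjoint (if c = c₀ then {q₁.length - 1} else ∅)
      ((q₁.length + ·) '' {i | IsBounce α β q₂ c i}) := by
    rw [Set.disjoint_left]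
    rintro _ h ⟨j, -, rfl⟩
    split_ifs at h <;> simp at h
    omega
  rw [bounces, setOf_isBounce_append hbf hq hq₁ hlast hhead,
    Set.ncard_union_eq hdisj (by split_ifs <;> simp) ((finite_setOf_isBounce q₂ c).image _),
    add_comm, Set.ncard_image_of_injective _ (add_right_injective _), bounces]
  split_ifs <;> simp

lemma le_of_isBounce_append (hbf : BounceFree α β q₁)
    (hq : α * q₁.count false = β * q₁.count true) (hq₁ : q₁ ≠ [])
    (hlast : q₁.getLast? = some c₀) (hhead : q₂.head? = some (!c₀)) {c : Bool} {i : ℕ}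
    (h : IsBounce α β (q₁ ++ q₂) c i) : q₁.length - 1 ≤ i := by
  have h' : i ∈ {i | IsBounce α β (q₁ ++ q₂) c i} := h
  rw [setOf_isBounce_append hbf hq hq₁ hlast hhead] at h'
  rcases h' with h' | ⟨j, -, rfl⟩
  · split_ifs at h' <;> simp at h'
    omega
  · exact (Nat.sub_le _ _).trans (Nat.le_add_right _ _)

end Append

lemma exists_eq_mul_of_mul_eq_mul (hα : 0 < α) (hcop : Nat.Coprime α β) {x y : ℕ}
    (h : α * y = β * x) : ∃ j, x = α * j ∧ y = β * j := by
  obtain ⟨j, rfl⟩ := hcop.dvd_of_dvd_mul_left (Dvd.intro y h)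
  refine ⟨j, rfl, Nat.eq_of_mul_eq_mul_left hα ?_⟩
  rw [h, Nat.mul_left_comm]

lemma IsBounce.exists_inL_take (hα : 0 < α) (hcop : Nat.Coprime α β) {k : ℕ}
    {p : LatticePath} (hp : InL α β k p) {c : Bool} {i : ℕ} (h : IsBounce α β p c i) :
    ∃ j, 0 < j ∧ j < k ∧ i + 1 = (α + β) * j ∧ InL α β j (p.take (i + 1)) := by
  obtain ⟨j, hx, hy⟩ := exists_eq_mul_of_mul_eq_mul hα hcop h.2.2
  have hlen : i + 1 = (α + β) * j := by
    have := (p.take (i + 1)).count_true_add_count_false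
    rw [hx, hy, List.length_take_of_le h.lt_length.le] at this
    rw [← this, add_mul]
  have hlt : (α + β) * j < (α + β) * k := by
    rw [← hlen, ← length_eq_of_inL hp]
    exact h.lt_length
  refine ⟨j, Nat.pos_of_ne_zero ?_, lt_of_mul_lt_mul_left hlt (Nat.zero_le _), hlen, hx, hy⟩
  rintro rfl
  omega

-- `0` for a bounce-free path.
noncomputable def firstBounce (α β : ℕ) (p : LatticePath) : ℕ :=
  sInf {i | ∃ c, IsBounce α β p c i}

lemma firstBounce_append {q₁ q₂ : LatticePath} {c₀ : Bool} (hbf : BounceFree α β q₁)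
    (hq : α * q₁.count false = β * q₁.count true) (hq₁ : q₁ ≠ [])
    (hlast : q₁.getLast? = some c₀) (hhead : q₂.head? = some (!c₀)) :
    firstBounce α β (q₁ ++ q₂) = q₁.length - 1 := by
  have hjunction := (isBounce_append_length_sub_one (q₂ := q₂) hq hq₁ c₀).mpr ⟨hlast, hhead⟩
  refine le_antisymm (Nat.sInf_le ⟨c₀, hjunction⟩) (le_csInf ⟨_, c₀, hjunction⟩ ?_)
  rintro i ⟨c, h⟩
  exact le_of_isBounce_append hbf hq hq₁ hlast hhead h

lemma exists_append_of_not_bounceFree (hα : 0 < α) (hcop : Nat.Coprime α β) {k : ℕ}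
    {p : LatticePath} (hp : InL α β k p) (hnb : ¬ BounceFree α β p) :
    ∃ j c q₁ q₂, 0 < j ∧ j < k ∧ p = q₁ ++ q₂ ∧
      InL α β j q₁ ∧ BounceFree α β q₁ ∧ q₁.getLast? = some c ∧
      InL α β (k - j) q₂ ∧ q₂.head? = some (!c) := by
  have hne : {i | ∃ c, IsBounce α β p c i}.Nonempty := by
    simp only [bounceFree_iff, not_forall, not_not] at hnb
    obtain ⟨c, i, h⟩ := hnb
    exact ⟨i, c, h⟩
  obtain ⟨c, hc⟩ : ∃ c, IsBounce α β p c (firstBounce α β p) := Nat.sInf_mem hne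
  set i := firstBounce α β p
  obtain ⟨j, hj0, hjk, -, hq₁⟩ := hc.exists_inL_take hα hcop hp
  have hsplit := (List.take_append_drop (i + 1) p).symm
  have hlen : (p.take (i + 1)).length = i + 1 := List.length_take_of_le hc.lt_length.le
  refine ⟨j, c, p.take (i + 1), p.drop (i + 1), hj0, hjk, hsplit, hq₁, ?_, ?_, ?_, ?_⟩
  · refine bounceFree_iff.mpr fun c' i' h => ?_
    have hi' : i' + 1 < i + 1 := hlen ▸ h.lt_length
    have h' := (isBounce_append_of_lt (q₂ := p.drop (i + 1)) h.lt_length c').mpr h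
    rw [List.take_append_drop] at h'
    have : i ≤ i' := Nat.sInf_le ⟨c', h'⟩
    omega
  · rw [List.getLast?_eq_getElem?, hlen, List.getElem?_take, if_pos (by omega),
      Nat.add_sub_cancel]
    exact hc.1
  · have hp' : InL α β k (p.take (i + 1) ++ p.drop (i + 1)) := by rwa [List.take_append_drop]
    constructor
    · have := hp'.1
      rw [List.count_append, hq₁.1] at this
      rw [Nat.mul_sub]
      omega
    · have := hp'.2
      rw [List.count_append, hq₁.2] at this
      rw [Nat.mul_sub]
      omega
  · rw [List.head?_drop]
    exact hc.2.1

section Glue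

variable {j k : ℕ} {q₁ q₂ : LatticePath} {c : Bool}

lemma leftBounces_append (hα : 0 < α) (h₁ : InL α β j q₁) (hj : 0 < j)
    (hbf : BounceFree α β q₁) (hlast : q₁.getLast? = some c) (hhead : q₂.head? = some (!c)) :
    leftBounces α β (q₁ ++ q₂) = leftBounces α β q₂ + c.toNat := by
  rw [leftBounces_eq_bounces, leftBounces_eq_bounces,
    bounces_append hbf h₁.mul_count_false_eq (h₁.ne_nil hα hj) hlast hhead]
  cases c <;> rfl

lemma rightBounces_append (hα : 0 < α) (h₁ : InL α β j q₁) (hj : 0 < j)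
    (hbf : BounceFree α β q₁) (hlast : q₁.getLast? = some c) (hhead : q₂.head? = some (!c)) :
    rightBounces α β (q₁ ++ q₂) = rightBounces α β q₂ + (!c).toNat := by
  rw [rightBounces_eq_bounces, rightBounces_eq_bounces,
    bounces_append hbf h₁.mul_count_false_eq (h₁.ne_nil hα hj) hlast hhead]
  cases c <;> rfl

lemma not_bounceFree_append (hα : 0 < α) (h₁ : InL α β j q₁) (hj : 0 < j)
    (hlast : q₁.getLast? = some c) (hhead : q₂.head? = some (!c)) :
    ¬ BounceFree α β (q₁ ++ q₂) := fun h =>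
  bounceFree_iff.mp h c _ <|
    (isBounce_append_length_sub_one h₁.mul_count_false_eq (h₁.ne_nil hα hj) c).mpr
      ⟨hlast, hhead⟩

lemma firstBounce_append_of_inL (hα : 0 < α) (h₁ : InL α β j q₁) (hj : 0 < j)
    (hbf : BounceFree α β q₁) (hlast : q₁.getLast? = some c) (hhead : q₂.head? = some (!c)) :
    firstBounce α β (q₁ ++ q₂) = (α + β) * j - 1 := by
  rw [firstBounce_append hbf h₁.mul_count_false_eq (h₁.ne_nil hα hj) hlast hhead,
    length_eq_of_inL h₁]

end Glue

/-! ### The first-bounce decomposition -/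

def bounceFreePaths (α β j : ℕ) (a c : Bool) : Set LatticePath :=
  {q | InL α β j q ∧ BounceFree α β q ∧ FirstStep q a ∧ LastStep q c}

section FirstBounceDecomposition

variable (α β) (a b : Bool) (k : ℕ) (C : ℕ → ℕ → Prop)

def suffixPaths (j : ℕ) (c : Bool) : Set LatticePath :=
  {q | InL α β (k - j) q ∧ FirstStep q (!c) ∧ LastStep q b ∧
    C (leftBounces α β q + c.toNat) (rightBounces α β q + (!c).toNat)}

def gluedPaths (j : ℕ) (c : Bool) : Set LatticePath :=
  (fun q => q.1 ++ q.2) '' (bounceFreePaths α β j a c ×ˢ suffixPaths α β b k C j c)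

variable {α β a b k C}

lemma mem_of_mem_gluedPaths (hα : 0 < α) {j : ℕ} {c : Bool} (hj : 0 < j) (hjk : j < k)
    {p : LatticePath} (hp : p ∈ gluedPaths α β a b k C j c) :
    (InL α β k p ∧ FirstStep p a ∧ LastStep p b ∧ ¬ BounceFree α β p ∧
      C (leftBounces α β p) (rightBounces α β p)) ∧
    firstBounce α β p = (α + β) * j - 1 ∧ IsBounce α β p c (firstBounce α β p) := by
  obtain ⟨⟨q₁, q₂⟩, ⟨⟨h₁, hbf, hf₁, hl₁⟩, ⟨h₂, hf₂, hl₂, hC⟩⟩, rfl⟩ := hp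
  have hq₁ := h₁.ne_nil hα hj
  refine ⟨⟨?_, (firstStep_append _ hq₁ a).mpr hf₁,
    (lastStep_append _ (h₂.ne_nil hα (by omega)) b).mpr hl₂,
    not_bounceFree_append hα h₁ hj hl₁ hf₂, ?_⟩, firstBounce_append_of_inL hα h₁ hj hbf hl₁ hf₂, ?_⟩
  · simpa [Nat.add_sub_cancel' hjk.le] using h₁.append h₂
  · rwa [leftBounces_append hα h₁ hj hbf hl₁ hf₂, rightBounces_append hα h₁ hj hbf hl₁ hf₂]
  · rw [firstBounce_append hbf h₁.mul_count_false_eq hq₁ hl₁ hf₂]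
    exact (isBounce_append_length_sub_one h₁.mul_count_false_eq hq₁ c).mpr ⟨hl₁, hf₂⟩

lemma setOf_not_bounceFree_eq_biUnion (hα : 0 < α) (hcop : Nat.Coprime α β) :
    {p | InL α β k p ∧ FirstStep p a ∧ LastStep p b ∧ ¬ BounceFree α β p ∧
      C (leftBounces α β p) (rightBounces α β p)} =
        ⋃ jc ∈ Finset.Ico 1 k ×ˢ Finset.univ, gluedPaths α β a b k C jc.1 jc.2 := by
  ext p
  simp only [Set.mem_iUnion, Finset.mem_product, Finset.mem_Ico, Finset.mem_univ, and_true]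
  constructor
  · rintro ⟨hp, hfirst, hlast, hnb, hC⟩
    obtain ⟨j, c, q₁, q₂, hj, hjk, rfl, h₁, hbf, hl₁, h₂, hf₂⟩ :=
      exists_append_of_not_bounceFree hα hcop hp hnb
    refine ⟨(j, c), ⟨hj, hjk⟩, (q₁, q₂), ⟨⟨h₁, hbf,
      (firstStep_append _ (h₁.ne_nil hα hj) a).mp hfirst, hl₁⟩,
      ⟨h₂, hf₂, (lastStep_append _ (h₂.ne_nil hα (by omega)) b).mp hlast, ?_⟩⟩, rfl⟩
    rwa [← leftBounces_append hα h₁ hj hbf hl₁ hf₂, ← rightBounces_append hα h₁ hj hbf hl₁ hf₂]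
  · rintro ⟨⟨j, c⟩, ⟨hj, hjk⟩, hp⟩
    exact (mem_of_mem_gluedPaths hα hj hjk hp).1

lemma pairwiseDisjoint_gluedPaths (hα : 0 < α) :
    ((Finset.Ico 1 k ×ˢ Finset.univ : Finset (ℕ × Bool)) : Set (ℕ × Bool)).PairwiseDisjoint
      fun jc => gluedPaths α β a b k C jc.1 jc.2 := by
  rintro ⟨j, c⟩ hjc ⟨j', c'⟩ hjc' hne
  simp only [Finset.coe_product, Set.mem_prod, Finset.mem_coe, Finset.mem_Ico] at hjc hjc'
  refine Set.disjoint_left.mpr fun p hp hp' => hne ?_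
  obtain ⟨-, hfirst, hc⟩ := mem_of_mem_gluedPaths hα hjc.1.1 hjc.1.2 hp
  obtain ⟨-, hfirst', hc'⟩ := mem_of_mem_gluedPaths hα hjc'.1.1 hjc'.1.2 hp'
  have := Nat.mul_pos (show 0 < α + β by omega) hjc.1.1
  have := Nat.mul_pos (show 0 < α + β by omega) hjc'.1.1
  exact Prod.ext (Nat.eq_of_mul_eq_mul_left (show 0 < α + β by omega)
    (show (α + β) * j = (α + β) * j' by omega))
    (Option.some.inj (hc.1.symm.trans hc'.1))

lemma ncard_gluedPaths (j : ℕ) (c : Bool) :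
    (gluedPaths α β a b k C j c).ncard =
      (bounceFreePaths α β j a c).ncard * (suffixPaths α β b k C j c).ncard := by
  rw [gluedPaths, Set.InjOn.ncard_image, Set.ncard_prod]
  rintro ⟨q₁, q₂⟩ ⟨h₁, -⟩ ⟨q₁', q₂'⟩ ⟨h₁', -⟩ h
  have hlen : q₁.length = q₁'.length := by rw [length_eq_of_inL h₁.1, length_eq_of_inL h₁'.1]
  obtain ⟨rfl, rfl⟩ := List.append_inj h hlen
  rfl

variable (a b k C) in
lemma ncard_not_bounceFree (hα : 0 < α) (hcop : Nat.Coprime α β) :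
    {p | InL α β k p ∧ FirstStep p a ∧ LastStep p b ∧ ¬ BounceFree α β p ∧
        C (leftBounces α β p) (rightBounces α β p)}.ncard =
      ∑ j ∈ Finset.Ico 1 k, ∑ c : Bool,
        (bounceFreePaths α β j a c).ncard * (suffixPaths α β b k C j c).ncard := by
  rw [setOf_not_bounceFree_eq_biUnion hα hcop,
    ncard_biUnion_finset _ _ ?_ (pairwiseDisjoint_gluedPaths hα), Finset.sum_product]
  · simp only [ncard_gluedPaths]
  · exact fun _ _ => ((finite_inL_and _ _).prod (finite_inL_and _ _)).image _

end FirstBounceDecomposition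

lemma ncard_eq_bounceFree_add_not_bounceFree (a b : Bool) (k : ℕ) (C : ℕ → ℕ → Prop) :
    {p | InL α β k p ∧ FirstStep p a ∧ LastStep p b ∧
        C (leftBounces α β p) (rightBounces α β p)}.ncard =
      {p | p ∈ bounceFreePaths α β k a b ∧ C 0 0}.ncard +
      {p | InL α β k p ∧ FirstStep p a ∧ LastStep p b ∧ ¬ BounceFree α β p ∧
        C (leftBounces α β p) (rightBounces α β p)}.ncard := by
  rw [← Set.ncard_union_eq _ ((finite_inL_and k _).subset fun p hp => hp.1) (finite_inL_and k _)]
  · congr 1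
    ext p
    by_cases hbf : BounceFree α β p
    · simp [hbf, bounceFreePaths, leftBounces_eq_bounces, rightBounces_eq_bounces,
        bounces_eq_zero_of_bounceFree hbf]
      tauto
    · simp [hbf, bounceFreePaths]
  · exact Set.disjoint_left.mpr fun p hp hp' => hp'.2.2.2.1 hp.1.2.1

/-! ### Generating functions -/

noncomputable def bfSer (α β : ℕ) (a c : Bool) : PowerSeries ℚ :=
  gfOf fun k => bounceFreePaths α β k a c

lemma coeff_gfOf_mul (S T : ℕ → Set LatticePath) (k : ℕ) :
    PowerSeries.coeff k (gfOf S * gfOf T) =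
      ∑ j ∈ Finset.Ico 1 k, ((S j).ncard : ℚ) * (T (k - j)).ncard := by
  rw [PowerSeries.coeff_mul, Finset.Nat.sum_antidiagonal_eq_sum_range_succ_mk]
  refine (Finset.sum_subset (fun j hj => by simp at hj ⊢; omega) fun j hj hj' => ?_).symm.trans
    (Finset.sum_congr rfl fun j hj => ?_)
  · simp only [Finset.mem_range, Finset.mem_Ico] at hj hj'
    rcases Nat.eq_zero_or_pos j with rfl | hj0
    · simp [coeff_gfOf]
    · simp [coeff_gfOf, show k - j = 0 by omega]
  · simp only [Finset.mem_Ico] at hj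
    simp [coeff_gfOf, show j ≠ 0 by omega, show k - j ≠ 0 by omega]

lemma pathSer_eq_bfSer_add (hα : 0 < α) (hcop : Nat.Coprime α β) (a b : Bool) :
    pathSer α β a b = bfSer α β a b + ∑ c : Bool, bfSer α β a c * pathSer α β (!c) b := by
  ext k
  rw [map_add, map_sum]
  simp only [bfSer, pathSer, coeff_gfOf_mul]
  rcases eq_or_ne k 0 with rfl | hk
  · simp [coeff_gfOf]
  rw [coeff_gfOf, coeff_gfOf, if_neg hk, if_neg hk, Finset.sum_comm]
  have hsplit := ncard_eq_bounceFree_add_not_bounceFree (α := α) (β := β) a b k fun _ _ => True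
  have hrest := ncard_not_bounceFree a b k (fun _ _ => True) hα hcop
  simp only [suffixPaths, and_true] at hsplit hrest
  rw [hsplit, hrest]
  push_cast
  rfl

section ToMv

open MvPowerSeries Finsupp

lemma coeff_toMv (φ : PowerSeries ℚ) (d : Fin 3 →₀ ℕ) :
    coeff d (toMv φ) = if d 1 = 0 ∧ d 2 = 0 then PowerSeries.coeff (d 0) φ else 0 := rfl

lemma eq_single_zero_iff (u : Fin 3 →₀ ℕ) : u = single 0 (u 0) ↔ u 1 = 0 ∧ u 2 = 0 := by
  constructor
  · intro h
    rw [h]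
    simp
  · rintro ⟨h1, h2⟩
    ext i
    fin_cases i <;> simp [h1, h2]

lemma coeff_toMv_mul (φ : PowerSeries ℚ) (M : MvPowerSeries (Fin 3) ℚ) (d : Fin 3 →₀ ℕ) :
    coeff d (toMv φ * M) =
      ∑ j ∈ Finset.range (d 0 + 1), PowerSeries.coeff j φ * coeff (d - single 0 j) M := by
  classical
  have hsub : (Finset.range (d 0 + 1)).image (fun j => (single (0 : Fin 3) j, d - single 0 j)) ⊆
      Finset.HasAntidiagonal.antidiagonal d := by
    intro p hp
    obtain ⟨j, hj, rfl⟩ := Finset.mem_image.mp hp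
    rw [Finset.HasAntidiagonal.mem_antidiagonal, add_tsub_cancel_of_le]
    rw [Finsupp.single_le_iff]
    simpa [Nat.lt_succ_iff] using hj
  rw [coeff_mul, ← Finset.sum_subset hsub, Finset.sum_image]
  · refine Finset.sum_congr rfl fun j _ => ?_
    rw [coeff_toMv]
    simp
  · intro j _ j' _ h
    exact Finsupp.single_injective 0 (congrArg Prod.fst h)
  · intro p hp hp'
    rw [coeff_toMv, if_neg, zero_mul]
    intro h
    refine hp' (Finset.mem_image.mpr ⟨p.1 0, ?_, ?_⟩)
    · have := congrArg (· 0) (Finset.HasAntidiagonal.mem_antidiagonal.mp hp)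
      simp only [Finsupp.coe_add, Pi.add_apply] at this
      simp
      omega
    · rw [← (eq_single_zero_iff p.1).mpr h, ← Finset.HasAntidiagonal.mem_antidiagonal.mp hp,
        add_tsub_cancel_left]

lemma toMv_add (φ ψ : PowerSeries ℚ) : toMv (φ + ψ) = toMv φ + toMv ψ := by
  ext d
  simp only [coeff_toMv, map_add]
  split_ifs <;> simp

lemma toMv_mul (φ ψ : PowerSeries ℚ) : toMv (φ * ψ) = toMv φ * toMv ψ := by
  ext d
  rw [coeff_toMv_mul, coeff_toMv, PowerSeries.coeff_mul,
    Finset.Nat.sum_antidiagonal_eq_sum_range_succ_mk]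
  split_ifs with h
  · refine Finset.sum_congr rfl fun j _ => ?_
    rw [coeff_toMv]
    simp [h]
  · refine (Finset.sum_eq_zero fun j _ => ?_).symm
    rw [coeff_toMv, if_neg (by simpa using h), mul_zero]

lemma constantCoeff_toMv (φ : PowerSeries ℚ) :
    constantCoeff (toMv φ) = PowerSeries.coeff 0 φ := by
  rw [← coeff_zero_eq_constantCoeff_apply, coeff_toMv]
  simp

end ToMv

section Trivariate

open MvPowerSeries Finsupp

noncomputable def bounceVar (c : Bool) : MvPowerSeries (Fin 3) ℚ := if c then sVar else tVar

lemma coeff_G3ab (a b : Bool) (d : Fin 3 →₀ ℕ) :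
    coeff d (G3ab α β a b) = if d 0 = 0 then 0 else
      (({p | InL α β (d 0) p ∧ FirstStep p a ∧ LastStep p b ∧
        leftBounces α β p = d 1 ∧ rightBounces α β p = d 2}).ncard : ℚ) := rfl

lemma coeff_toMv_gfOf_mul_G3ab (S : ℕ → Set LatticePath) (a b : Bool) (d : Fin 3 →₀ ℕ) :
    coeff d (toMv (gfOf S) * G3ab α β a b) =
      ∑ j ∈ Finset.Ico 1 (d 0), ((S j).ncard : ℚ) *
        ({q | InL α β (d 0 - j) q ∧ FirstStep q a ∧ LastStep q b ∧
          leftBounces α β q = d 1 ∧ rightBounces α β q = d 2}.ncard : ℚ) := by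
  rw [coeff_toMv_mul]
  refine (Finset.sum_subset (fun j hj => by simp at hj ⊢; omega) fun j hj hj' => ?_).symm.trans
    (Finset.sum_congr rfl fun j hj => ?_)
  · simp only [Finset.mem_range, Finset.mem_Ico] at hj hj'
    rcases Nat.eq_zero_or_pos j with rfl | hj0
    · simp [coeff_gfOf]
    · rw [coeff_G3ab, if_pos (by simp; omega), mul_zero]
  · simp only [Finset.mem_Ico] at hj
    rw [coeff_gfOf, if_neg (by omega), coeff_G3ab, if_neg (by simp; omega)]
    simp

lemma coeff_bounceVar_mul (a b c : Bool) (d : Fin 3 →₀ ℕ) :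
    coeff d (bounceVar c * (toMv (bfSer α β a c) * G3ab α β (!c) b)) =
      ∑ j ∈ Finset.Ico 1 (d 0), ((bounceFreePaths α β j a c).ncard : ℚ) *
        ((suffixPaths α β b (d 0) (fun l r => l = d 1 ∧ r = d 2) j c).ncard : ℚ) := by
  have hvar : bounceVar c = monomial (single (if c then 1 else 2) 1) 1 := by cases c <;> rfl
  rw [hvar, coeff_monomial_mul, bfSer]
  by_cases hle : single (if c then 1 else 2) 1 ≤ d
  · rw [if_pos hle, one_mul, coeff_toMv_gfOf_mul_G3ab]
    have h0 : (d - single (if c then 1 else 2) 1 : Fin 3 →₀ ℕ) 0 = d 0 := by cases c <;> simp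
    rw [h0]
    refine Finset.sum_congr rfl fun j _ => ?_
    congr 3
    ext q
    cases c <;> simp [suffixPaths, single_le_iff] at hle ⊢ <;> omega
  · rw [if_neg hle]
    refine (Finset.sum_eq_zero fun j _ => ?_).symm
    convert mul_zero _
    rw [Nat.cast_eq_zero, suffixPaths, Set.ncard_eq_zero (finite_inL_and _ _),
      Set.eq_empty_iff_forall_notMem]
    cases c <;> simp [single_le_iff] at hle ⊢ <;> omega

lemma G3ab_eq_bfSer_add (hα : 0 < α) (hcop : Nat.Coprime α β) (a b : Bool) :
    G3ab α β a b = toMv (bfSer α β a b) +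
      ∑ c : Bool, bounceVar c * (toMv (bfSer α β a c) * G3ab α β (!c) b) := by
  ext d
  rw [map_add, map_sum]
  simp only [coeff_bounceVar_mul]
  rw [coeff_G3ab, coeff_toMv, bfSer, coeff_gfOf]
  rcases eq_or_ne (d 0) 0 with h0 | h0
  · simp [h0]
  rw [if_neg h0, if_neg h0, Finset.sum_comm]
  have hsplit := ncard_eq_bounceFree_add_not_bounceFree (α := α) (β := β) a b (d 0)
    fun l r => l = d 1 ∧ r = d 2
  rw [hsplit, ncard_not_bounceFree a b (d 0) (fun l r => l = d 1 ∧ r = d 2) hα hcop]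
  push_cast
  congr 1
  by_cases h12 : d 1 = 0 ∧ d 2 = 0
  · simp [h12, bounceFreePaths]
  · have : ¬(0 = d 1 ∧ 0 = d 2) := by omega
    simp [h12, this]

end Trivariate

/-! ### The matrix identity -/

lemma one_add_mul_sub_mul_eq {R : Type*} [Ring R] {F g G P Q : R} (hg : g = F + F * P * g)
    (hG : G = F + F * Q * G) (hU : IsUnit (1 - F * P)) : (1 + g * (P - Q)) * G = g := by
  have hUg : (1 - F * P) * g = F := by
    rw [sub_mul, one_mul, sub_eq_iff_eq_add]
    exact hg
  refine hU.mul_left_cancel ?_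
  calc (1 - F * P) * ((1 + g * (P - Q)) * G)
      = (1 - F * P + (1 - F * P) * g * (P - Q)) * G := by noncomm_ring
    _ = G - F * Q * G := by rw [hUg]; noncomm_ring
    _ = (1 - F * P) * g := by rw [hUg, sub_eq_iff_eq_add]; exact hG

section Matrices

variable {R : Type*} [CommRing R]

def boolMat (f : Bool → Bool → R) : Matrix (Fin 2) (Fin 2) R :=
  !![f true true, f true false; f false true, f false false]

def crossMat (w : Bool → R) : Matrix (Fin 2) (Fin 2) R := !![0, w true; w false, 0]

lemma boolMat_eq_add_mul {X Y : Bool → Bool → R} (w : Bool → R)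
    (h : ∀ a b, X a b = Y a b + ∑ c : Bool, w c * (Y a c * X (!c) b)) :
    boolMat X = boolMat Y + boolMat Y * crossMat w * boolMat X := by
  refine Matrix.ext fun i j => ?_
  fin_cases i <;> fin_cases j <;>
  · simp [boolMat, crossMat]
    conv_lhs => rw [h]
    simp
    ring

end Matrices

lemma isUnit_one_sub_boolMat_bfSer_mul :
    IsUnit (1 - boolMat (fun a c => toMv (bfSer α β a c)) * crossMat 1) := by
  rw [Matrix.isUnit_iff_isUnit_det, MvPowerSeries.isUnit_iff_constantCoeff]
  simp [boolMat, crossMat, Matrix.one_fin_two, Matrix.det_fin_two, constantCoeff_toMv, bfSer,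
    coeff_gfOf]

end

/-- In `ℚ[[x,s,t]]`, `G_ee(x,s,t)·D = g_ee(x)` and
`G_nn(x,s,t)·D = g_nn(x)`. -/
theorem statement9 (α β : ℕ) (hα : 0 < α) (hβ : 0 < β) (hcop : Nat.Coprime α β) :
    G3ab α β true true * D3 α β = toMv (geeSer α β) ∧
    G3ab α β false false * D3 α β = toMv (gnnSer α β) := by
  set F := boolMat fun a c => toMv (bfSer α β a c)
  set g := boolMat fun a b => toMv (pathSer α β a b)
  set G := boolMat (G3ab α β)
  have hg : g = F + F * crossMat 1 * g := boolMat_eq_add_mul 1 fun a b => by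
    simpa [toMv_add, toMv_mul] using congrArg toMv (pathSer_eq_bfSer_add hα hcop a b)
  have hG : G = F + F * crossMat bounceVar * G :=
    boolMat_eq_add_mul bounceVar (G3ab_eq_bfSer_add hα hcop)
  set M := 1 + g * (crossMat 1 - crossMat bounceVar)
  have hMG : M * G = g := one_add_mul_sub_mul_eq hg hG isUnit_one_sub_boolMat_bfSer_mul
  have hcramer : M.det • G = M.adjugate * g := by
    rw [← hMG, ← Matrix.mul_assoc, Matrix.adjugate_mul, Matrix.smul_mul, Matrix.one_mul]
  have hE := congrFun (congrFun hcramer 0) 0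
  have hN := congrFun (congrFun hcramer 1) 1
  simp [M, g, G, boolMat, crossMat, bounceVar, Matrix.adjugate_fin_two, Matrix.det_fin_two,
    Matrix.one_fin_two, pathSer_true_true hα hβ, pathSer_false_false hα hβ,
    pathSer_true_false hα hβ, pathSer_false_true hα hβ] at hE hN
  unfold D3
  exact ⟨by linear_combination hE, by linear_combination hN⟩
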